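/- Let θ < 0.5 and h > 4, and let (v_1, ..., v_n) be a proper θ-thin sequence in R^2 whose edge sequence is h-decreasing. Then (1 − 2/h)^n · Σ_{k=2}^{n-1} β(v_{k-1}, v_k, v_{k+1}) ≤ β(v_1, v_{n-1}, v_n) ≤ Σ_{k=2}^{n-1} β(v_{k-1}, v_k, v_{k+1}). -/

import Mathlib

open EuclideanGeometry Real Finset

noncomputable section

/-- Points of the plane. -/
abbrev Pt : Type := EuclideanSpace ℝ (Fin 2)

/-- `Δ(a,b,c)`: the oriented area of the parallelepiped spanned by `a - b` and `c - b`. -/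
def tdet (a b c : Pt) : ℝ :=
  (a 0 - b 0) * (c 1 - b 1) - (a 1 - b 1) * (c 0 - b 0)

/-- `β(a,b,c) = π - ∠(a,b,c)`, where `∠` is the unsigned angle at `b`. -/
def beta (a b c : Pt) : ℝ := Real.pi - EuclideanGeometry.angle a b c

/-- Cyclic successor on `{1, …, n}`. -/
def cyc (n j : ℕ) : ℕ := if j = n then 1 else j + 1

/-- Cyclic predecessor on `{1, …, n}`. -/
def cycPred (n j : ℕ) : ℕ := if j = 1 then n else j - 1

/-- `(v 1, …, v n)` is a proper sequence: `Δ(v₁,v₂,v₃) > 0` and every segment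
`conv{v_j, v_{j+1}}` (indices cyclic) is an edge of the convex hull of the points,
i.e. it is the set of maximizers of some linear functional over the points. -/
def Proper (n : ℕ) (v : ℕ → Pt) : Prop :=
  0 < tdet (v 1) (v 2) (v 3) ∧
  ∀ j, 1 ≤ j → j ≤ n →
    ∃ (ℓ : Pt →ₗ[ℝ] ℝ) (c : ℝ), ℓ (v j) = c ∧ ℓ (v (cyc n j)) = c ∧
      ∀ k, 1 ≤ k → k ≤ n → k ≠ j → k ≠ cyc n j → ℓ (v k) < c

/-- `(v 1, …, v n)` is `θ`-thin. -/
def Thin (n : ℕ) (v : ℕ → Pt) (θ : ℝ) : Prop :=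
  ∑ k ∈ Finset.Icc 2 (n - 1), beta (v (k - 1)) (v k) (v (k + 1)) ≤ θ

/-- The edge sequence of `(v 1, …, v n)` is `h`-decreasing. -/
def EdgeDecr (n : ℕ) (v : ℕ → Pt) (h : ℝ) : Prop :=
  ∀ k, 1 ≤ k → k + 2 ≤ n → h * dist (v (k + 1)) (v (k + 2)) ≤ dist (v k) (v (k + 1))

/-!
Write `n = m + 3`, transport the picture to `ℂ` and let `e₀, …, e_{m+1}` be the edge vectors. Each
edge of a proper sequence has all other vertices strictly on one side of its line, which propagates
`Δ(v₁, v₂, v₃) > 0` along the sequence: every turn is a left turn, so the exterior angle at an inner vertex is `arg (e_{k+1} / e_k) ∈ (0, π)`, and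
while the total turning `A` stays below `π / 2` these arguments add up: `arg (e_j / e₀)` is a
partial sum of the turns. The chord `v_{n-1} - v₁ = ∑_{k ≤ m} e_k`, divided by `e₀`, is `1` plus
terms of argument in `[0, A]` and modulus at most `h⁻ᵏ`, so its argument `t` lies between `0` and
its imaginary part, hence in `[0, A / (h - 1)]`. Therefore `β(v₁, v_{n-1}, v_n) = A - t`, which
lies between `(1 - 1 / (h - 1)) A ≥ (1 - 2 / h) ^ n A` and `A`.
-/

/-- The conjugation makes `Δ(a, b, c) > 0` a counterclockwise turn at `b`. -/
def toComplex : Pt ≃ₗᵢ[ℝ] ℂ := Complex.orthonormalBasisOneI.repr.symm.trans Complex.conjLIE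

lemma toComplex_apply (p : Pt) : toComplex p = p 0 - p 1 * Complex.I := by
  simp [toComplex, sub_eq_add_neg]

lemma beta_eq_angle (a b c : Pt) :
    beta a b c =
      InnerProductGeometry.angle (toComplex c - toComplex b) (toComplex b - toComplex a) := by
  rw [beta, EuclideanGeometry.angle, ← InnerProductGeometry.angle_neg_left,
    InnerProductGeometry.angle_comm, ← map_sub, ← map_sub,
    ← toComplex.toLinearIsometry.angle_map, neg_vsub_eq_vsub_rev]
  rfl

lemma tdet_eq_norm_sq_mul_im (a b c : Pt) :
    tdet a b c = ‖toComplex b - toComplex a‖ ^ 2 *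
      ((toComplex c - toComplex b) / (toComplex b - toComplex a)).im := by
  rw [← Complex.normSq_eq_norm_sq, Complex.div_im]
  by_cases hab : toComplex b - toComplex a = 0
  · have : b = a := toComplex.injective (sub_eq_zero.1 hab)
    simp [tdet, this]
  · field_simp [Complex.normSq_eq_zero.not.2 hab]
    simp [tdet, toComplex_apply]
    ring

lemma dist_eq_norm_toComplex_sub (a b : Pt) : dist a b = ‖toComplex a - toComplex b‖ := by
  rw [← map_sub, LinearIsometryEquiv.norm_map, dist_eq_norm]

namespace Complex

lemma im_le_norm_mul_arg {z : ℂ} (hz : 0 ≤ arg z) : z.im ≤ ‖z‖ * arg z := by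
  rw [← norm_mul_sin_arg]
  exact mul_le_mul_of_nonneg_left (Real.sin_le hz) (norm_nonneg z)

lemma arg_le_im_of_one_le_re {w : ℂ} (hre : 1 ≤ w.re) (him : 0 ≤ w.im) :
    arg w ≤ w.im := by
  have harg : 0 ≤ arg w := arg_nonneg_iff.2 him
  have hlt : arg w < π / 2 := by
    have := abs_arg_lt_pi_div_two_iff.2 (Or.inl (by linarith) : 0 < w.re ∨ w = 0)
    rwa [abs_of_nonneg harg] at this
  calc arg w ≤ Real.tan (arg w) := Real.le_tan harg hlt
    _ = w.im / w.re := tan_arg w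
    _ ≤ w.im := div_le_self him hre

lemma arg_div_eq_sum_arg_div (e : ℕ → ℂ) (j : ℕ) (hne : ∀ k ≤ j, e k ≠ 0)
    (hnonneg : ∀ k < j, 0 ≤ arg (e (k + 1) / e k))
    (hsum : ∑ k ∈ range j, arg (e (k + 1) / e k) ≤ π) :
    arg (e j / e 0) = ∑ k ∈ range j, arg (e (k + 1) / e k) := by
  induction j with
  | zero => simp [div_self (hne 0 le_rfl)]
  | succ j ih =>
    have hj := hnonneg j j.lt_succ_self
    rw [sum_range_succ] at hsum ⊢
    have hprev : 0 ≤ ∑ k ∈ range j, arg (e (k + 1) / e k) :=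
      sum_nonneg fun k hk => hnonneg k (by simp at hk; omega)
    have hcum := ih (fun k hk => hne k (by omega)) (fun k hk => hnonneg k (by omega)) (by linarith)
    rw [← hcum] at hprev hsum ⊢
    have hj0 : e j ≠ 0 := hne j (by omega)
    rw [← div_mul_div_cancel₀ hj0, arg_mul (div_ne_zero (hne _ le_rfl) hj0)
      (div_ne_zero hj0 (hne 0 (by omega))) ⟨by linarith [pi_pos], by linarith⟩, add_comm]

lemma one_le_re_sum_and_arg_mem_Icc {z : ℕ → ℂ} {m : ℕ} {r φ : ℝ} (hr0 : 0 ≤ r) (hr1 : r < 1)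
    (hφ : φ ≤ π / 2) (hz0 : z 0 = 1) (harg : ∀ k ≤ m, arg (z k) ∈ Set.Icc 0 φ)
    (hnorm : ∀ k ≤ m, ‖z k‖ ≤ r ^ k) :
    1 ≤ (∑ k ∈ range (m + 1), z k).re ∧
      arg (∑ k ∈ range (m + 1), z k) ∈ Set.Icc 0 (φ * (r / (1 - r))) := by
  have hφ0 : 0 ≤ φ := (harg 0 m.zero_le).1.trans (harg 0 m.zero_le).2
  have hre : ∀ k ≤ m, 0 ≤ (z k).re := fun k hk => abs_arg_le_pi_div_two_iff.1 <| by
    rw [abs_of_nonneg (harg k hk).1]; exact (harg k hk).2.trans hφ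
  have him : ∀ k ≤ m, 0 ≤ (z k).im := fun k hk => arg_nonneg_iff.1 (harg k hk).1
  have hsum_re : 1 ≤ (∑ k ∈ range (m + 1), z k).re := by
    rw [re_sum, sum_range_succ', hz0, one_re, le_add_iff_nonneg_left]
    exact sum_nonneg fun k hk => hre _ (by simp at hk; omega)
  have hsum_im : (∑ k ∈ range (m + 1), z k).im ≤ φ * (r / (1 - r)) := by
    have hgeom : ∑ k ∈ range m, r ^ (k + 1) ≤ r / (1 - r) := by
      have h := geom_sum_Ico_le_of_lt_one (m := 0) (n := m) hr0 hr1
      rw [← range_eq_Ico, pow_zero] at h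
      calc ∑ k ∈ range m, r ^ (k + 1) = r * ∑ k ∈ range m, r ^ k := by simp_rw [pow_succ', mul_sum]
        _ ≤ r * (1 / (1 - r)) := mul_le_mul_of_nonneg_left h hr0
        _ = r / (1 - r) := mul_one_div r (1 - r)
    rw [im_sum, sum_range_succ', hz0, one_im, add_zero]
    calc ∑ k ∈ range m, (z (k + 1)).im
        ≤ ∑ k ∈ range m, r ^ (k + 1) * φ := sum_le_sum fun k hk => by
          simp only [mem_range] at hk
          have hk' := harg (k + 1) (by omega)
          exact (im_le_norm_mul_arg hk'.1).trans
            (mul_le_mul (hnorm _ (by omega)) hk'.2 hk'.1 (by positivity))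
      _ = φ * ∑ k ∈ range m, r ^ (k + 1) := by rw [← sum_mul, mul_comm]
      _ ≤ φ * (r / (1 - r)) := mul_le_mul_of_nonneg_left hgeom hφ0
  have hsum_im0 : 0 ≤ (∑ k ∈ range (m + 1), z k).im := by
    rw [im_sum]; exact sum_nonneg fun k hk => him k (by simp at hk; omega)
  exact ⟨hsum_re, arg_nonneg_iff.2 hsum_im0,
    (arg_le_im_of_one_le_re hsum_re hsum_im0).trans hsum_im⟩

lemma arg_div_eq_sub_arg {x y : ℂ} (hx : x ≠ 0) (hy : y ≠ 0)
    (h : arg x - arg y ∈ Set.Ioc (-π) π) : arg (x / y) = arg x - arg y := by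
  rw [← arg_coe_angle_toReal_eq_arg, arg_div_coe_angle hx hy, ← Real.Angle.coe_sub,
    Real.Angle.toReal_coe_eq_self_iff_mem_Ioc.2 h]

lemma ne_zero_of_im_div_pos {x y : ℂ} (h : 0 < (x / y).im) : x ≠ 0 ∧ y ≠ 0 := by
  constructor <;> rintro rfl <;> simp at h

lemma norm_div_le_inv_pow {e : ℕ → ℂ} {h : ℝ} (hh : 0 < h) (k : ℕ)
    (hdecr : ∀ j < k, h * ‖e (j + 1)‖ ≤ ‖e j‖) : ‖e k / e 0‖ ≤ (1 / h) ^ k := by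
  rcases eq_or_ne (e 0) 0 with h0 | h0
  · rw [h0, div_zero, norm_zero]; positivity
  rw [norm_div, div_le_iff₀ (norm_pos_iff.2 h0)]
  refine le_geom (u := fun k => ‖e k‖) (by positivity) k fun j hj => ?_
  rw [one_div, inv_mul_eq_div, le_div_iff₀' hh]
  exact hdecr j hj

theorem angle_last_chord_bounds {e : ℕ → ℂ} {m : ℕ} {h : ℝ} (hh : 2 ≤ h)
    (hturn : ∀ k ≤ m, 0 < (e (k + 1) / e k).im)
    (hsmall : ∑ k ∈ range (m + 1), InnerProductGeometry.angle (e (k + 1)) (e k) ≤ π / 2)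
    (hdecr : ∀ k < m, h * ‖e (k + 1)‖ ≤ ‖e k‖) :
    (1 - 1 / (h - 1)) * ∑ k ∈ range (m + 1), InnerProductGeometry.angle (e (k + 1)) (e k) ≤
        InnerProductGeometry.angle (e (m + 1)) (∑ k ∈ range (m + 1), e k) ∧
      InnerProductGeometry.angle (e (m + 1)) (∑ k ∈ range (m + 1), e k) ≤
        ∑ k ∈ range (m + 1), InnerProductGeometry.angle (e (k + 1)) (e k) := by
  have hne : ∀ k ≤ m + 1, e k ≠ 0 := fun k hk => by
    rcases Nat.lt_or_eq_of_le hk with hk | rfl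
    · exact (ne_zero_of_im_div_pos (hturn k (by omega))).2
    · exact (ne_zero_of_im_div_pos (hturn m le_rfl)).1
  have hturn0 : ∀ k ≤ m, 0 ≤ arg (e (k + 1) / e k) := fun k hk =>
    arg_nonneg_iff.2 (hturn k hk).le
  have hangle : ∀ k ∈ range (m + 1),
      InnerProductGeometry.angle (e (k + 1)) (e k) = arg (e (k + 1) / e k) := fun k hk => by
    rw [mem_range] at hk
    rw [angle_eq_abs_arg (hne _ (by omega)) (hne _ (by omega)), abs_of_nonneg (hturn0 k (by omega))]
  rw [sum_congr rfl hangle] at hsmall ⊢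
  set A := ∑ k ∈ range (m + 1), arg (e (k + 1) / e k)
  have hbound : ∀ j ≤ m + 1, ∑ k ∈ range j, arg (e (k + 1) / e k) ∈ Set.Icc 0 A := fun j hj =>
    ⟨sum_nonneg fun k hk => hturn0 k (by simp at hk; omega),
      sum_le_sum_of_subset_of_nonneg (range_subset_range.2 hj)
        fun k hk _ => hturn0 k (by simp at hk; omega)⟩
  have hcum : ∀ j ≤ m + 1, arg (e j / e 0) = ∑ k ∈ range j, arg (e (k + 1) / e k) := fun j hj =>
    arg_div_eq_sum_arg_div e j (fun k hk => hne k (by omega)) (fun k hk => hturn0 k (by omega))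
      ((hbound j hj).2.trans (hsmall.trans (by linarith [pi_pos])))
  obtain ⟨hre, ht0, ht⟩ := one_le_re_sum_and_arg_mem_Icc (z := fun k => e k / e 0) (m := m)
    (r := 1 / h) (φ := A) (by positivity) (by rw [div_lt_one] <;> linarith) hsmall
    (div_self (hne 0 (by omega))) (fun k hk => hcum k (by omega) ▸ hbound k (by omega))
    fun k hk => norm_div_le_inv_pow (by linarith) k fun j hj => hdecr j (by omega)
  simp only [← sum_div] at hre ht0 ht
  rw [show 1 / h / (1 - 1 / h) = 1 / (h - 1) by field_simp] at ht
  set t := arg ((∑ k ∈ range (m + 1), e k) / e 0)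
  have hA0 : 0 ≤ A := (hbound (m + 1) le_rfl).1
  have htA : t ≤ A := ht.trans (mul_le_of_le_one_right hA0 (by rw [div_le_one] <;> linarith))
  have hS : (∑ k ∈ range (m + 1), e k) / e 0 ≠ 0 := fun h0 => by norm_num [h0] at hre
  have hA : arg (e (m + 1) / e 0) = A := hcum _ le_rfl
  have harg : arg (e (m + 1) / ∑ k ∈ range (m + 1), e k) = A - t := by
    rw [← div_div_div_cancel_right₀ (hne 0 (by omega)),
      arg_div_eq_sub_arg (div_ne_zero (hne _ le_rfl) (hne 0 (by omega))) hS
        (by rw [hA]; constructor <;> linarith [pi_pos]), hA]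
  rw [angle_eq_abs_arg (hne _ le_rfl) (fun h0 => hS (by simp [h0])), harg,
    abs_of_nonneg (by linarith)]
  constructor <;> linarith

end Complex

lemma tdet_rotate (a b c : Pt) : tdet b c a = tdet a b c := by
  unfold tdet; ring

lemma tdet_pos_of_same_side (ℓ : Pt →ₗ[ℝ] ℝ) {a b x y : Pt} (hab : ℓ a = ℓ b)
    (hx : ℓ x < ℓ a) (hy : ℓ y < ℓ a) (hpos : 0 < tdet a b x) : 0 < tdet a b y := by
  set α := ℓ (EuclideanSpace.single 0 1)
  set γ := ℓ (EuclideanSpace.single 1 1)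
  have hℓ : ∀ p : Pt, ℓ p = p 0 * α + p 1 * γ := by
    intro p
    have hp : p = p 0 • EuclideanSpace.single 0 1 + p 1 • EuclideanSpace.single 1 1 := by
      ext i; fin_cases i <;> simp
    conv_lhs => rw [hp]
    simp [α, γ]
  simp only [hℓ] at hab hx hy
  unfold tdet at hpos ⊢
  have hker : α * (a 0 - b 0) + γ * (a 1 - b 1) = 0 := by linarith
  -- both `tdet a b ·` and `ℓ · - ℓ b` vanish on `a - b`, so they are proportional
  have hprop : ((a 0 - b 0) * (x 1 - b 1) - (a 1 - b 1) * (x 0 - b 0)) *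
      (α * (y 0 - b 0) + γ * (y 1 - b 1)) =
      ((a 0 - b 0) * (y 1 - b 1) - (a 1 - b 1) * (y 0 - b 0)) *
      (α * (x 0 - b 0) + γ * (x 1 - b 1)) := by
    linear_combination ((x 1 - b 1) * (y 0 - b 0) - (x 0 - b 0) * (y 1 - b 1)) * hker
  nlinarith [mul_neg_of_pos_of_neg hpos (show α * (y 0 - b 0) + γ * (y 1 - b 1) < 0 by linarith)]

lemma Proper.tdet_pos {n : ℕ} {v : ℕ → Pt} (hv : Proper n v) {j : ℕ} (hj : 1 ≤ j)
    (hjn : j + 2 ≤ n) : 0 < tdet (v j) (v (j + 1)) (v (j + 2)) := by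
  induction j, hj using Nat.le_induction with
  | base => exact hv.1
  | succ j hj ih =>
    obtain ⟨ℓ, c, hℓj, hℓj', hℓ⟩ := hv.2 (j + 1) (by omega) (by omega)
    rw [cyc, if_neg (by omega)] at hℓj' hℓ
    have hprev := hℓ j (by omega) (by omega) (by omega) (by omega)
    have hnext := hℓ (j + 3) (by omega) (by omega) (by omega) (by omega)
    rw [← hℓj] at hprev hnext
    exact tdet_pos_of_same_side ℓ (hℓj.trans hℓj'.symm) hprev hnext
      (by rw [tdet_rotate]; exact ih (by omega))

lemma one_sub_two_div_pow_le {h : ℝ} (hh : 2 ≤ h) {n : ℕ} (hn : n ≠ 0) :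
    (1 - 2 / h) ^ n ≤ 1 - 1 / (h - 1) := by
  have h2h : 2 / h ≤ 1 := by rw [div_le_one] <;> linarith
  calc (1 - 2 / h) ^ n ≤ 1 - 2 / h :=
        pow_le_of_le_one (by linarith) (by linarith [show 0 < 2 / h by positivity]) hn
    _ ≤ 1 - 1 / (h - 1) := by
        rw [sub_le_sub_iff_left, div_le_div_iff₀ (by linarith) (by linarith)]; linarith

/-- Bounds for `β(v₁, v_{n-1}, v_n)` in terms of the sum of the angles of a
proper `θ`-thin sequence (`θ < 0.5`) whose edge sequence is `h`-decreasing
(`h > 4`). -/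
theorem stmt11 (n : ℕ) (hn : 3 ≤ n) (θ h : ℝ) (hθ : θ < 0.5) (hh : 4 < h)
    (v : ℕ → Pt) (hv : Proper n v) (hthin : Thin n v θ) (hedge : EdgeDecr n v h) :
    (1 - 2 / h) ^ n * ∑ k ∈ Finset.Icc 2 (n - 1), beta (v (k - 1)) (v k) (v (k + 1)) ≤
        beta (v 1) (v (n - 1)) (v n) ∧
      beta (v 1) (v (n - 1)) (v n) ≤
        ∑ k ∈ Finset.Icc 2 (n - 1), beta (v (k - 1)) (v k) (v (k + 1)) := by
  obtain ⟨m, rfl⟩ : ∃ m, n = m + 3 := ⟨n - 3, by omega⟩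
  set e : ℕ → ℂ := fun k => toComplex (v (k + 2)) - toComplex (v (k + 1))
  have hturn : ∀ k ≤ m, 0 < (e (k + 1) / e k).im := fun k hk => by
    have := hv.tdet_pos (j := k + 1) (by omega) (by omega)
    rw [tdet_eq_norm_sq_mul_im] at this
    exact pos_of_mul_pos_right this (sq_nonneg _)
  have hdecr : ∀ k < m, h * ‖e (k + 1)‖ ≤ ‖e k‖ := fun k hk => by
    simpa only [e, dist_eq_norm_toComplex_sub, norm_sub_rev] using
      hedge (k + 1) (by omega) (by omega)
  have hsum : ∑ k ∈ Icc 2 (m + 3 - 1), beta (v (k - 1)) (v k) (v (k + 1)) =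
      ∑ k ∈ range (m + 1), InnerProductGeometry.angle (e (k + 1)) (e k) := by
    rw [show Icc 2 (m + 3 - 1) = Ico (0 + 2) (m + 1 + 2) from (Ico_add_one_right_eq_Icc _ _).symm,
      ← sum_Ico_add', ← range_eq_Ico]
    exact sum_congr rfl fun k _ => beta_eq_angle _ _ _
  have hlast : beta (v 1) (v (m + 3 - 1)) (v (m + 3)) =
      InnerProductGeometry.angle (e (m + 1)) (∑ k ∈ range (m + 1), e k) := by
    rw [beta_eq_angle, sum_range_sub (fun k => toComplex (v (k + 1)))]
    rfl
  rw [Thin, hsum] at hthin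
  rw [hsum, hlast]
  obtain ⟨hlow, hup⟩ := Complex.angle_last_chord_bounds (by linarith) hturn
    (by norm_num at hθ; linarith [pi_gt_three]) hdecr
  refine ⟨le_trans (mul_le_mul_of_nonneg_right ?_ ?_) hlow, hup⟩
  · exact one_sub_two_div_pow_le (by linarith) (by omega)
  · exact sum_nonneg fun k _ => InnerProductGeometry.angle_nonneg _ _
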